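/- The original (interpolated) KBR second-order correction φ⁽²⁾_old(x₀) = Σᵢ(2φ(xᵢ) − φ⁽¹⁾(xᵢ))Pᵢ, where the first-order predictions at the training points are assumed to be φ⁽¹⁾(xᵢ) = a + bxᵢ + c·Σⱼxⱼ²Pⱼ, yields the residual error φ⁽²⁾_old(x₀) − φ(x₀) = c·(Θ(x₀) − Θ̂(x₀)), where Θ̂(x₀) = ΣᵢΘ(xᵢ)Pᵢ and Θ(y) = Σᵢxᵢ²Pᵢ − y², for any quadratic φ(x) = a + bx + cx² and normalized weights Pᵢ with ΣᵢxᵢPᵢ = x₀. -/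
import Mathlib


/-- Residual error of the original (interpolated) KBR second-order correction:
φ⁽²⁾_old(x₀) − φ(x₀) = c·(Θ(x₀) − Θ̂(x₀)). -/
theorem kbr_old_correction_residual
    {ι : Type*} [Fintype ι] (a b c x₀ : ℝ) (x P : ι → ℝ)
    (φ : ℝ → ℝ) (hφ : ∀ t, φ t = a + b * t + c * t ^ 2)
    (hPsum : ∑ i, P i = 1)
    (hmom : ∑ i, x i * P i = x₀)
    (φ₁ : ι → ℝ) (hφ₁ : ∀ i, φ₁ i = a + b * x i + c * ∑ j, (x j) ^ 2 * P j)
    (Θ : ℝ → ℝ) (hΘ : ∀ y, Θ y = (∑ i, (x i) ^ 2 * P i) - y ^ 2) :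
    (∑ i, (2 * φ (x i) - φ₁ i) * P i) - φ x₀
      = c * (Θ x₀ - ∑ i, Θ (x i) * P i) := by
  set S := ∑ j, (x j) ^ 2 * P j with hS
  have hL : ∑ i, (2 * φ (x i) - φ₁ i) * P i
      = a * (∑ i, P i) + b * (∑ i, x i * P i) + 2 * c * S - c * S * (∑ i, P i) := by
    rw [Finset.mul_sum, Finset.mul_sum, Finset.mul_sum, hS, Finset.mul_sum,
      ← Finset.sum_add_distrib, ← Finset.sum_add_distrib, ← Finset.sum_sub_distrib]
    exact Finset.sum_congr rfl fun i _ => by rw [hφ, hφ₁]; ring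
  have hR : ∑ i, Θ (x i) * P i = S * (∑ i, P i) - S := by
    simp only [hΘ, sub_mul, Finset.sum_sub_distrib, ← Finset.mul_sum, hS]
  rw [hL, hR, hΘ, hφ, hPsum, hmom]
  ring
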